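/- If E[‖Y‖₂²] < ∞ and E[(f(X,Z) − E[f(X,Z)|Z]) (Y − E[Y|Z])ᵀ] = 0 holds for all f ∈ L²(ℝ^{d_X+d_Z}, P_{XZ}), then E[Y | X, Z] = E[Y | Z] almost surely. -/

import Mathlib

/-!
Testing the hypothesis against indicators `f = 1_t` suffices. For `s = {(X, Z) ∈ t}` and
`W = Y - E[Y | Z]` it gives `∫ (1_s - E[1_s | Z]) • W = 0`. By the pull-out property, `W` integrates
to zero against every bounded `σ(Z)`-measurable weight, in particular against `E[1_s | Z]`; hence
`∫_s W = 0`, i.e. `E[Y | Z]` has the set integrals that characterise `E[Y | X, Z]`.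
-/

open MeasureTheory

section

variable {Ω E : Type*} [NormedAddCommGroup E] [NormedSpace ℝ E] [CompleteSpace E]
  {m m₀ : MeasurableSpace Ω} {μ : Measure Ω}

lemma condExp_sub_condExp_ae_eq_zero (hm : m ≤ m₀) [SigmaFinite (μ.trim hm)] {Y : Ω → E}
    (hY : Integrable Y μ) : μ[Y - μ[Y | m] | m] =ᵐ[μ] 0 := by
  filter_upwards [condExp_sub hY integrable_condExp m] with ω hω
  rw [hω, condExp_of_stronglyMeasurable hm stronglyMeasurable_condExp integrable_condExp,
    sub_self]

lemma integral_smul_eq_integral_smul_condExp (hm : m ≤ m₀) [SigmaFinite (μ.trim hm)]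
    {g : Ω → ℝ} {Y : Ω → E} (hg : AEStronglyMeasurable[m] g μ) (hgY : Integrable (g • Y) μ)
    (hY : Integrable Y μ) : ∫ ω, g ω • Y ω ∂μ = ∫ ω, g ω • (μ[Y | m]) ω ∂μ :=
  calc ∫ ω, g ω • Y ω ∂μ = ∫ ω, (μ[g • Y | m]) ω ∂μ := (integral_condExp hm).symm
    _ = ∫ ω, g ω • (μ[Y | m]) ω ∂μ :=
      integral_congr_ae (condExp_smul_of_aestronglyMeasurable_left hg hgY hY)

lemma integral_smul_sub_condExp_eq_zero (hm : m ≤ m₀) [SigmaFinite (μ.trim hm)]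
    {g : Ω → ℝ} {Y : Ω → E} (hg : AEStronglyMeasurable[m] g μ)
    (hgY : Integrable (g • (Y - μ[Y | m])) μ) (hY : Integrable Y μ) :
    ∫ ω, g ω • (Y ω - (μ[Y | m]) ω) ∂μ = 0 :=
  calc ∫ ω, g ω • (Y ω - (μ[Y | m]) ω) ∂μ = ∫ ω, g ω • (μ[Y - μ[Y | m] | m]) ω ∂μ :=
        integral_smul_eq_integral_smul_condExp hm hg hgY (hY.sub integrable_condExp)
    _ = 0 := integral_eq_zero_of_ae <| by
      filter_upwards [condExp_sub_condExp_ae_eq_zero hm hY] with ω hω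
      rw [hω, Pi.zero_apply, smul_zero]

lemma ae_abs_condExp_indicator_one_le (s : Set Ω) :
    ∀ᵐ ω ∂μ, |(μ[s.indicator (1 : Ω → ℝ) | m]) ω| ≤ 1 :=
  ae_bdd_abs_condExp_of_ae_bdd_abs <| ae_of_all _ fun ω => by
    by_cases hω : ω ∈ s <;> simp [hω]

lemma condExp_ae_eq_condExp_of_forall_integral_indicator_smul_eq_zero {m₁ m₂ : MeasurableSpace Ω}
    (h₁₂ : m₁ ≤ m₂) (h₂ : m₂ ≤ m₀) [IsFiniteMeasure μ] {Y : Ω → E} (hY : Integrable Y μ)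
    (h : ∀ s, MeasurableSet[m₂] s →
      ∫ ω, (s.indicator (1 : Ω → ℝ) ω - (μ[s.indicator 1 | m₁]) ω) • (Y ω - (μ[Y | m₁]) ω) ∂μ = 0) :
    μ[Y | m₂] =ᵐ[μ] μ[Y | m₁] := by
  refine (ae_eq_condExp_of_forall_setIntegral_eq h₂ hY
    (fun s _ _ => integrable_condExp.integrableOn) (fun s hs _ => ?_)
    (stronglyMeasurable_condExp.mono h₁₂).aestronglyMeasurable).symm
  have h₁ : m₁ ≤ m₀ := h₁₂.trans h₂
  set W := Y - μ[Y | m₁]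
  have hW : Integrable W μ := hY.sub integrable_condExp
  set g := μ[s.indicator (1 : Ω → ℝ) | m₁]
  have hgW : Integrable (fun ω => g ω • W ω) μ :=
    hW.bdd_smul 1 (stronglyMeasurable_condExp.mono h₁).aestronglyMeasurable
      (by simpa only [Real.norm_eq_abs] using ae_abs_condExp_indicator_one_le s)
  have hsW : (fun ω => s.indicator (1 : Ω → ℝ) ω • W ω) = s.indicator W := by
    ext ω; by_cases hω : ω ∈ s <;> simp [hω]
  have hsW_int : Integrable (fun ω => s.indicator (1 : Ω → ℝ) ω • W ω) μ :=
    hsW ▸ hW.indicator (h₂ _ hs)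
  refine (sub_eq_zero.mp ?_).symm
  calc ∫ ω in s, Y ω ∂μ - ∫ ω in s, (μ[Y | m₁]) ω ∂μ
      = ∫ ω, s.indicator (1 : Ω → ℝ) ω • W ω ∂μ := by
        rw [hsW, integral_indicator (h₂ _ hs)]
        exact (integral_sub hY.integrableOn integrable_condExp.integrableOn).symm
    _ = ∫ ω, (s.indicator (1 : Ω → ℝ) ω - g ω) • W ω ∂μ + ∫ ω, g ω • W ω ∂μ := by
        rw [← integral_add (by simp_rw [sub_smul]; exact hsW_int.sub hgW) hgW]
        simp only [sub_smul, sub_add_cancel]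
    _ = 0 := by
        have hgW_zero : ∫ ω, g ω • W ω ∂μ = 0 := integral_smul_sub_condExp_eq_zero h₁
          stronglyMeasurable_condExp.aestronglyMeasurable hgW hY
        rw [hgW_zero, add_zero]
        exact h s hs

end

theorem stmt_2_general {Ω : Type*} [m0 : MeasurableSpace Ω] (μ : Measure Ω) [IsProbabilityMeasure μ]
    {dX dY dZ : ℕ}
    (X : Ω → EuclideanSpace ℝ (Fin dX)) (Y : Ω → EuclideanSpace ℝ (Fin dY))
    (Z : Ω → EuclideanSpace ℝ (Fin dZ))
    (hX : Measurable X) (hZ : Measurable Z)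
    (hY2 : MemLp Y 2 μ)
    (h : ∀ f : EuclideanSpace ℝ (Fin dX) × EuclideanSpace ℝ (Fin dZ) → ℝ,
      Measurable f → MemLp f 2 (Measure.map (fun ω => (X ω, Z ω)) μ) →
      ∫ ω, (f (X ω, Z ω)
          - (μ[(fun ω => f (X ω, Z ω)) | MeasurableSpace.comap Z inferInstance]) ω)
          • (Y ω - (μ[Y | MeasurableSpace.comap Z inferInstance]) ω) ∂μ
        = 0) :
    μ[Y | MeasurableSpace.comap (fun ω => (X ω, Z ω)) inferInstance]
      =ᵐ[μ] μ[Y | MeasurableSpace.comap Z inferInstance] := by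
  refine condExp_ae_eq_condExp_of_forall_integral_indicator_smul_eq_zero
    (measurable_snd.comp (comap_measurable _)).comap_le (hX.prodMk hZ).comap_le
    (hY2.integrable one_le_two) ?_
  rintro _ ⟨t, ht, rfl⟩
  exact h (t.indicator 1) (measurable_one.indicator ht)
    (memLp_indicator_const 2 ht 1 (.inr (measure_ne_top _ _)))

/-- If `E[‖Y‖²] < ∞` and `E[(f(X,Z) − E[f(X,Z)|Z])(Y − E[Y|Z])] = 0` for all
`f ∈ L²(P_{XZ})`, then `E[Y | X, Z] = E[Y | Z]` almost surely. -/
theorem stmt_2 {Ω : Type*} [m0 : MeasurableSpace Ω] (μ : Measure Ω) [IsProbabilityMeasure μ]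
    {dX dY dZ : ℕ}
    (X : Ω → EuclideanSpace ℝ (Fin dX)) (Y : Ω → EuclideanSpace ℝ (Fin dY))
    (Z : Ω → EuclideanSpace ℝ (Fin dZ))
    (hX : Measurable X) (hY : Measurable Y) (hZ : Measurable Z)
    (hY2 : MemLp Y 2 μ)
    (h : ∀ f : EuclideanSpace ℝ (Fin dX) × EuclideanSpace ℝ (Fin dZ) → ℝ,
      Measurable f → MemLp f 2 (Measure.map (fun ω => (X ω, Z ω)) μ) →
      ∫ ω, (f (X ω, Z ω)
          - (μ[(fun ω => f (X ω, Z ω)) | MeasurableSpace.comap Z inferInstance]) ω)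
          • (Y ω - (μ[Y | MeasurableSpace.comap Z inferInstance]) ω) ∂μ
        = 0) :
    μ[Y | MeasurableSpace.comap (fun ω => (X ω, Z ω)) inferInstance]
      =ᵐ[μ] μ[Y | MeasurableSpace.comap Z inferInstance] :=
  stmt_2_general (m0 := m0) μ X Y Z hX hZ hY2 h
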